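/- arXiv:2309.17121 — 4 statements merged into one kernel-verified Lean document; each statement's English description precedes it below -/
import Mathlib

section
/- Let c ≥ 6 be an integer and let G be a simple map (cellularly embedded simple connected graph) of genus g with minimum degree at least c, with |V| vertices, |E| edges and face set F. If |V| ≥ c+1+v_x and the face excess Σ_{f∈F}(d(f)−3) is at least f_x, then g ≥ ⌈(c−2)(c−3)/12 + (c−6)·v_x/12 + f_x/6⌉. -/
/-- A combinatorial map (connected graph cellularly embedded in an orientable surface),
given by a set of darts `D`, the edge involution `σ` and the rotation `ρ`. -/
structure CombMap where
  D : Type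
  fin : Finite D
  σ : Equiv.Perm D
  ρ : Equiv.Perm D
  σ_invol : ∀ d, σ (σ d) = d
  σ_fixfree : ∀ d, σ d ≠ d
  conn : ∀ d d' : D, ∃ g ∈ Subgroup.closure ({σ, ρ} : Set (Equiv.Perm D)), g d = d'

attribute [instance] CombMap.fin

namespace CombMap

variable (M : CombMap)

/-- The face permutation. -/
def φ : Equiv.Perm M.D := M.ρ * M.σ

def vSetoid : Setoid M.D :=
  ⟨M.ρ.SameCycle, ⟨fun _ => Equiv.Perm.SameCycle.refl _ _,
    Equiv.Perm.SameCycle.symm, Equiv.Perm.SameCycle.trans⟩⟩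

def eSetoid : Setoid M.D :=
  ⟨M.σ.SameCycle, ⟨fun _ => Equiv.Perm.SameCycle.refl _ _,
    Equiv.Perm.SameCycle.symm, Equiv.Perm.SameCycle.trans⟩⟩

def fSetoid : Setoid M.D :=
  ⟨M.φ.SameCycle, ⟨fun _ => Equiv.Perm.SameCycle.refl _ _,
    Equiv.Perm.SameCycle.symm, Equiv.Perm.SameCycle.trans⟩⟩

/-- Vertices are orbits of `ρ`. -/
def Vertex := Quotient M.vSetoid
/-- Edges are orbits of `σ`. -/
def Edge := Quotient M.eSetoid
/-- Faces are orbits of `φ`. -/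
def Face := Quotient M.fSetoid

instance : Finite M.Vertex := Quotient.finite _
instance : Finite M.Edge := Quotient.finite _
instance : Finite M.Face := Quotient.finite _

def vtx (d : M.D) : M.Vertex := Quotient.mk M.vSetoid d
def edg (d : M.D) : M.Edge := Quotient.mk M.eSetoid d
def fce (d : M.D) : M.Face := Quotient.mk M.fSetoid d

noncomputable def nV : ℕ := Nat.card M.Vertex
noncomputable def nE : ℕ := Nat.card M.Edge
noncomputable def nF : ℕ := Nat.card M.Face

/-- The size of a face: the length of its facial walk, i.e. the number of darts in it. -/
noncomputable def faceSize (f : M.Face) : ℕ := Nat.card {d : M.D // M.fce d = f}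

/-- The degree of a vertex: the number of darts emanating from it. -/
noncomputable def degree (v : M.Vertex) : ℕ := Nat.card {d : M.D // M.vtx d = v}

/-- The face excess `Σ_f (d(f) - 3)`. -/
noncomputable def faceExcess : ℤ := ∑ᶠ f : M.Face, ((M.faceSize f : ℤ) - 3)

/-- The underlying graph of the map is simple: no loops, no multiple edges. -/
def Simple : Prop :=
  (∀ d, M.vtx d ≠ M.vtx (M.σ d)) ∧
  ∀ d d', M.vtx d = M.vtx d' → M.vtx (M.σ d) = M.vtx (M.σ d') → M.edg d = M.edg d'

/-- The dual has no loops. -/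
def DualLoopFree : Prop := ∀ d, M.fce d ≠ M.fce (M.σ d)

/-- The dual is simple: no loops and no multiple edges. -/
def DualSimple : Prop :=
  M.DualLoopFree ∧
  ∀ d d', M.fce d = M.fce d' → M.fce (M.σ d) = M.fce (M.σ d') → M.edg d = M.edg d'

/-- The underlying simple graph on the vertices of the map. -/
def graph : SimpleGraph M.Vertex :=
  SimpleGraph.fromRel (fun a b => ∃ d, M.vtx d = a ∧ M.vtx (M.σ d) = b)

/-- The underlying simple graph of the dual map, on the faces of the map. -/
def dualGraph : SimpleGraph M.Face :=
  SimpleGraph.fromRel (fun a b => ∃ d, M.fce d = a ∧ M.fce (M.σ d) = b)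

/-- Vertex `v` lies on the face `f`. -/
def VertexOnFace (v : M.Vertex) (f : M.Face) : Prop := ∃ d, M.fce d = f ∧ M.vtx d = v

/-- Faces `f` and `f'` share an edge. -/
def FaceAdj (f f' : M.Face) : Prop := ∃ d, M.fce d = f ∧ M.fce (M.σ d) = f'

end CombMap

/-- `k`-connectivity of a graph: more than `k` vertices, and removing fewer than `k`
vertices never disconnects it. -/
def KConn {α : Type} (H : SimpleGraph α) (k : ℕ) : Prop :=
  k < Nat.card α ∧ ∀ S : Set α, S.ncard < k → (H.induce Sᶜ).Connected


section Aux

open scoped Classical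

lemma card_eq_finsum_fibers {α β : Type} [Finite α] [Finite β] (f : α → β) :
    Nat.card α = ∑ᶠ b : β, Nat.card {a // f a = b} := by
  cases nonempty_fintype α
  cases nonempty_fintype β
  simp only [Nat.card_eq_fintype_card, finsum_eq_sum_of_fintype]
  rw [← Fintype.card_sigma]
  exact Fintype.card_congr (Equiv.sigmaFiberEquiv f).symm

namespace CombMap

variable (M : CombMap)

lemma sigma_zpow (n : ℤ) (d : M.D) : (M.σ ^ n) d = d ∨ (M.σ ^ n) d = M.σ d := by
  have h2 : M.σ ^ (2 : ℤ) = 1 := by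
    have : M.σ ^ (2 : ℕ) = 1 := by
      ext x; simp [pow_succ, M.σ_invol]
    rw [show (2:ℤ) = ((2:ℕ):ℤ) from rfl, zpow_natCast, this]
  rcases Int.even_or_odd n with ⟨k, hk⟩ | ⟨k, hk⟩
  · left
    have : M.σ ^ n = 1 := by
      rw [hk, ← two_mul, zpow_mul, h2, one_zpow]
    simp [this]
  · right
    have : M.σ ^ n = M.σ := by
      rw [hk, zpow_add, zpow_mul, h2, one_zpow, zpow_one, one_mul]
    simp [this]

lemma edg_fiber (d0 : M.D) : {d : M.D | M.edg d = M.edg d0} = {d0, M.σ d0} := by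
  ext d
  simp only [Set.mem_setOf_eq, Set.mem_insert_iff, Set.mem_singleton_iff]
  constructor
  · intro h
    have h' : M.σ.SameCycle d d0 := Quotient.eq.mp h
    obtain ⟨n, hn⟩ := h'
    rcases M.sigma_zpow n d with h1 | h1
    · left; rw [← hn, h1]
    · right
      have : M.σ d = d0 := by rw [← hn, h1]
      rw [← this, M.σ_invol]
  · rintro (rfl | rfl)
    · rfl
    · exact Quotient.sound ⟨1, by simp [M.σ_invol]⟩

lemma edge_fiber_card (e : M.Edge) : Nat.card {d : M.D // M.edg d = e} = 2 := by
  induction e using Quotient.inductionOn with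
  | _ d0 =>
    calc Nat.card {d : M.D // M.edg d = M.edg d0}
        = Set.ncard {d : M.D | M.edg d = M.edg d0} := (Nat.card_coe_set_eq _)
      _ = Set.ncard {d0, M.σ d0} := by rw [M.edg_fiber d0]
      _ = 2 := Set.ncard_pair (Ne.symm (M.σ_fixfree d0))

lemma card_darts_eq_two_nE : Nat.card M.D = 2 * M.nE := by
  cases nonempty_fintype M.Edge
  have h := card_eq_finsum_fibers M.edg
  rw [finsum_eq_sum_of_fintype] at h
  simp only [M.edge_fiber_card] at h
  rw [h, Finset.sum_const, Finset.card_univ, smul_eq_mul, nE,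
    Nat.card_eq_fintype_card, mul_comm]

lemma card_darts_eq_sum_faceSize : Nat.card M.D = ∑ᶠ f : M.Face, M.faceSize f :=
  card_eq_finsum_fibers M.fce

lemma card_darts_eq_sum_degree : Nat.card M.D = ∑ᶠ v : M.Vertex, M.degree v :=
  card_eq_finsum_fibers M.vtx

lemma faceExcess_eq : M.faceExcess = (Nat.card M.D : ℤ) - 3 * M.nF := by
  cases nonempty_fintype M.Face
  have h := M.card_darts_eq_sum_faceSize
  rw [finsum_eq_sum_of_fintype] at h
  rw [faceExcess, finsum_eq_sum_of_fintype, Finset.sum_sub_distrib, h]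
  push_cast
  rw [Finset.sum_const, Finset.card_univ, nF, Nat.card_eq_fintype_card]
  push_cast
  ring

lemma c_mul_nV_le (c : ℕ) (hdeg : ∀ v : M.Vertex, c ≤ M.degree v) :
    c * M.nV ≤ Nat.card M.D := by
  cases nonempty_fintype M.Vertex
  have h := M.card_darts_eq_sum_degree
  rw [finsum_eq_sum_of_fintype] at h
  calc c * M.nV = ∑ _v : M.Vertex, c := by
        rw [Finset.sum_const, Finset.card_univ, smul_eq_mul, nV,
          Nat.card_eq_fintype_card, mul_comm]
    _ ≤ ∑ v : M.Vertex, M.degree v := Finset.sum_le_sum (fun v _ => hdeg v)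
    _ = Nat.card M.D := h.symm

end CombMap

end Aux

/-- Genus lower bound from vertex and face excess: if `c ≥ 6`, `G` is a simple map of
genus `g` with minimum degree at least `c`, at least `c + 1 + v_x` vertices and face
excess at least `f_x`, then `g ≥ ⌈(c-2)(c-3)/12 + (c-6)·v_x/12 + f_x/6⌉`. -/
theorem genus_lower_bound_of_excess
    (M : CombMap) (c vx fx : ℕ) (g : ℤ)
    (hc : 6 ≤ c)
    (hsimple : M.Simple)
    (hdeg : ∀ v : M.Vertex, c ≤ M.degree v)
    (hV : (c : ℤ) + 1 + vx ≤ (M.nV : ℤ))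
    (hfx : (fx : ℤ) ≤ M.faceExcess)
    (heuler : (M.nV : ℤ) - M.nE + M.nF = 2 - 2 * g) :
    ⌈((c : ℚ) - 2) * ((c : ℚ) - 3) / 12 + ((c : ℚ) - 6) * vx / 12 + (fx : ℚ) / 6⌉ ≤ g := by
  have hDE : (Nat.card M.D : ℤ) = 2 * M.nE := by exact_mod_cast M.card_darts_eq_two_nE
  have hdegsum : (c : ℤ) * M.nV ≤ (Nat.card M.D : ℤ) := by
    exact_mod_cast M.c_mul_nV_le c hdeg
  have hexc : (fx : ℤ) ≤ (Nat.card M.D : ℤ) - 3 * M.nF := by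
    rw [← M.faceExcess_eq]; exact hfx
  have hc' : (6 : ℤ) ≤ c := by exact_mod_cast hc
  have hprod : ((c : ℤ) + 1 + vx) * ((c : ℤ) - 6) ≤ (M.nV : ℤ) * ((c : ℤ) - 6) :=
    mul_le_mul_of_nonneg_right hV (by linarith)
  have key : ((c : ℤ) - 2) * ((c : ℤ) - 3) + ((c : ℤ) - 6) * vx + 2 * fx ≤ 12 * g := by
    nlinarith [hDE, hdegsum, hexc, hprod, heuler]
  rw [Int.ceil_le]
  have keyQ : ((c : ℚ) - 2) * ((c : ℚ) - 3) + ((c : ℚ) - 6) * vx + 2 * fx ≤ 12 * g := by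
    exact_mod_cast key
  linarith
end

section
/- For k ∈ {3,4,5}, there is no empty k-circuit containing a face f that shares no edge with the spanning face f_e. -/
namespace CombMap

variable (M : CombMap)

/-- An empty `k`-circuit: a map on at most `k` vertices with a spanning face `f_e` of
size `k`, whose underlying graph is simple, whose dual has no loops, and all of whose
dual multi-edges are incident with `f_e`. -/
def IsEmptyCircuit (k : ℕ) (fe : M.Face) : Prop :=
  M.nV ≤ k ∧ M.faceSize fe = k ∧ (∀ v : M.Vertex, M.VertexOnFace v fe) ∧
  M.Simple ∧ M.DualLoopFree ∧
  ∀ d d', M.fce d = M.fce d' → M.fce (M.σ d) = M.fce (M.σ d') → M.edg d ≠ M.edg d' →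
    (M.fce d = fe ∨ M.fce (M.σ d) = fe)

/-- An empty `k`-pair: a map on at most `k` vertices with two spanning faces
`f_e, f_e'` with `d(f_e)+d(f_e') = k` not sharing an edge, whose underlying graph is
simple, whose dual has no loops, and all of whose dual multi-edges are incident with
`f_e` or `f_e'`. -/
def IsEmptyPair (k : ℕ) (fe fe' : M.Face) : Prop :=
  M.nV ≤ k ∧ fe ≠ fe' ∧ M.faceSize fe + M.faceSize fe' = k ∧
  (∀ v : M.Vertex, M.VertexOnFace v fe ∨ M.VertexOnFace v fe') ∧
  ¬ M.FaceAdj fe fe' ∧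
  M.Simple ∧ M.DualLoopFree ∧
  ∀ d d', M.fce d = M.fce d' → M.fce (M.σ d) = M.fce (M.σ d') → M.edg d ≠ M.edg d' →
    (M.fce d = fe ∨ M.fce d = fe' ∨ M.fce (M.σ d) = fe ∨ M.fce (M.σ d) = fe')

end CombMap

/-!
The edges of `f` are not edges of `f_e`, and the faces across the edges of `f` are pairwise
distinct and differ from `f` and `f_e`, because every dual multi-edge involves `f_e`. As every
face has at least three darts and a simple map on `n` vertices has at most `n(n-1)` darts,
`k + 4|f| ≤ k(k-1)`; hence `k = 5` and `f` is a triangle. Every vertex of this triangle lies on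
`f_e`, where it has two neighbours, both off the triangle because its sides are edges of `f`.
This gives six distinct edges of `f_e`, which has only five.
-/

-- An edge with exactly one endpoint in `T` is counted at that endpoint only.
lemma two_mul_ncard_le_ncard_of_forall_exists_ne {V : Type*} {T : Set V} {E : Set (Sym2 V)}
    (hE : E.Finite)
    (h : ∀ x ∈ T, ∃ a b, a ∉ T ∧ b ∉ T ∧ a ≠ b ∧ s(x, a) ∈ E ∧ s(x, b) ∈ E) :
    2 * T.ncard ≤ E.ncard := by
  choose a b ha hb hab hea heb using h
  let c (p : T × Bool) : V := if p.2 then a p.1 p.1.2 else b p.1 p.1.2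
  have hc : ∀ p, c p ∉ T ∧ s(p.1.1, c p) ∈ E := fun ⟨⟨x, hx⟩, i⟩ => by
    cases i
    exacts [⟨hb x hx, heb x hx⟩, ⟨ha x hx, hea x hx⟩]
  have hinj : Function.Injective fun p : T × Bool => (⟨s(p.1.1, c p), (hc p).2⟩ : E) := by
    rintro ⟨⟨x, hx⟩, i⟩ ⟨⟨y, hy⟩, j⟩ hxy
    rcases Sym2.eq_iff.mp (Subtype.ext_iff.mp hxy) with ⟨rfl, hij⟩ | ⟨hxc, -⟩
    · cases i <;> cases j <;> simp only [c, Bool.false_eq_true, if_true, if_false] at hij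
      all_goals first | rfl | exact absurd hij (hab x hx) | exact absurd hij.symm (hab x hx)
    · exact ((hc (⟨y, hy⟩, j)).1 ((show x = c (⟨y, hy⟩, j) from hxc) ▸ hx)).elim
  have := hE.to_subtype
  calc 2 * T.ncard = Nat.card (T × Bool) := by simp [Nat.card_prod, mul_comm]
    _ ≤ E.ncard := Nat.card_le_card_of_injective _ hinj

namespace CombMap

open Finset

variable (M : CombMap)

lemma vtx_ρ (d : M.D) : M.vtx (M.ρ d) = M.vtx d :=
  (Quotient.sound (Equiv.Perm.SameCycle.refl M.ρ d |>.apply_right)).symm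

lemma fce_φ (d : M.D) : M.fce (M.φ d) = M.fce d :=
  (Quotient.sound (Equiv.Perm.SameCycle.refl M.φ d |>.apply_right)).symm

lemma vtx_φ (d : M.D) : M.vtx (M.φ d) = M.vtx (M.σ d) :=
  M.vtx_ρ (M.σ d)

lemma edg_eq_edg_iff {d d' : M.D} : M.edg d = M.edg d' ↔ d' = d ∨ d' = M.σ d := by
  constructor
  · intro h
    obtain ⟨i, hi, rfl⟩ := (Quotient.exact h : M.σ.SameCycle d d').exists_pow_eq'
    have : orderOf M.σ ≤ 2 :=
      orderOf_le_of_pow_eq_one two_pos (Equiv.ext fun d => by simp [sq, M.σ_invol])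
    have : i < 2 := by omega
    interval_cases i <;> simp
  · rintro (rfl | rfl)
    · rfl
    · exact Quotient.sound (Equiv.Perm.SameCycle.refl M.σ d |>.apply_right)

def ends (d : M.D) : Sym2 M.Vertex := s(M.vtx d, M.vtx (M.σ d))

lemma ends_eq (d : M.D) : M.ends d = s(M.vtx d, M.vtx (M.φ d)) := by
  rw [ends, vtx_φ]

def faceVertices (g : M.Face) : Set M.Vertex := M.vtx '' {d | M.fce d = g}

def faceEdges (g : M.Face) : Set (Sym2 M.Vertex) := M.ends '' {d | M.fce d = g}

lemma faceSize_eq_ncard (g : M.Face) : M.faceSize g = {d | M.fce d = g}.ncard :=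
  rfl

lemma ncard_faceVertices_le (g : M.Face) : (M.faceVertices g).ncard ≤ M.faceSize g :=
  Set.ncard_image_le

lemma ncard_faceEdges_le (g : M.Face) : (M.faceEdges g).ncard ≤ M.faceSize g :=
  Set.ncard_image_le

variable {M}

lemma mem_faceVertices_of_mk_mem_faceEdges {g : M.Face} {x y : M.Vertex}
    (h : s(x, y) ∈ M.faceEdges g) : y ∈ M.faceVertices g := by
  obtain ⟨d, hd, he⟩ := h
  rw [ends_eq, Sym2.eq_iff] at he
  rcases he with ⟨-, rfl⟩ | ⟨rfl, -⟩
  · exact ⟨M.φ d, (M.fce_φ d).trans hd, rfl⟩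
  · exact ⟨d, hd, rfl⟩

lemma sum_faceSize_le (s : Finset M.Face) : ∑ g ∈ s, M.faceSize g ≤ Nat.card M.D := by
  classical
  have := Fintype.ofFinite M.D
  calc ∑ g ∈ s, M.faceSize g = #{d | M.fce d ∈ s} := by
        rw [card_eq_sum_card_fiberwise (f := M.fce) (t := s) fun d hd => by simpa using hd]
        refine sum_congr rfl fun g hg => ?_
        rw [faceSize, Nat.card_eq_fintype_card, Fintype.card_subtype, filter_filter]
        congr 1; ext d; simp only [mem_filter]; grind
    _ ≤ Nat.card M.D := by rw [Nat.card_eq_fintype_card]; exact card_le_univ _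

namespace Simple

lemma eq_or_eq_σ_of_ends_eq (hs : M.Simple) {d d' : M.D} (h : M.ends d = M.ends d') :
    d' = d ∨ d' = M.σ d := by
  rw [← edg_eq_edg_iff]
  rcases Sym2.eq_iff.mp h with ⟨h1, h2⟩ | ⟨h1, h2⟩
  · exact hs.2 d d' h1 h2
  · have := hs.2 d (M.σ d') h1 (by rwa [M.σ_invol])
    exact this.trans (M.edg_eq_edg_iff.mpr (.inr rfl)).symm

lemma card_le_mul_pred (hs : M.Simple) : Nat.card M.D ≤ M.nV * (M.nV - 1) := by
  classical
  have := Fintype.ofFinite M.D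
  have := Fintype.ofFinite M.Vertex
  have hinj : Function.Injective fun d => (M.vtx d, M.vtx (M.σ d)) := by
    intro d d' h
    obtain ⟨h1, h2⟩ := Prod.ext_iff.mp h
    rcases M.edg_eq_edg_iff.mp (hs.2 d d' h1 h2) with rfl | rfl
    · rfl
    · exact absurd h1 (hs.1 d)
  have := card_le_card_of_injOn (s := univ) (t := univ.offDiag) _
    (fun d _ => by simpa using hs.1 d) hinj.injOn
  rwa [offDiag_card, ← Nat.mul_sub_one, card_univ, card_univ,
    ← Nat.card_eq_fintype_card, ← Nat.card_eq_fintype_card] at this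

lemma φ_ne (hs : M.Simple) (d : M.D) : M.φ d ≠ d := fun h =>
  hs.1 d (by rw [← vtx_φ, h])

lemma ne_of_mk_mem_faceEdges (hs : M.Simple) {g : M.Face} {x y : M.Vertex}
    (h : s(x, y) ∈ M.faceEdges g) : x ≠ y := by
  rintro rfl
  obtain ⟨d, -, hd⟩ := h
  rw [ends, Sym2.eq_iff, or_self] at hd
  exact hs.1 d (hd.1.trans hd.2.symm)

lemma disjoint_faceEdges (hs : M.Simple) {g g' : M.Face} (hne : g ≠ g')
    (hna : ¬ M.FaceAdj g g') : Disjoint (M.faceEdges g) (M.faceEdges g') := by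
  rw [Set.disjoint_left]
  rintro _ ⟨d, hd, rfl⟩ ⟨d', hd', h⟩
  rcases hs.eq_or_eq_σ_of_ends_eq h.symm with rfl | rfl
  · exact hne (hd.symm.trans hd')
  · exact hna ⟨d, hd, hd'⟩

lemma ends_injOn (hs : M.Simple) (hdl : M.DualLoopFree) (g : M.Face) :
    Set.InjOn M.ends {d | M.fce d = g} := by
  intro d hd d' hd' h
  rcases hs.eq_or_eq_σ_of_ends_eq h with rfl | rfl
  · rfl
  · exact absurd (hd.trans hd'.symm) (hdl d)

-- The two edges are the one the facial walk arrives along and the one it leaves along.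
lemma exists_ne_of_mem_faceVertices (hs : M.Simple) (hdl : M.DualLoopFree) {g : M.Face}
    {x : M.Vertex} (hx : x ∈ M.faceVertices g) :
    ∃ a b, a ≠ b ∧ s(x, a) ∈ M.faceEdges g ∧ s(x, b) ∈ M.faceEdges g := by
  obtain ⟨d, hd, rfl⟩ := hx
  set e := M.φ.symm d
  have he : M.fce e = g := by rw [← hd, ← M.fce_φ e, Equiv.apply_symm_apply]
  have hende : M.ends e = s(M.vtx d, M.vtx e) := by
    rw [ends_eq, Equiv.apply_symm_apply, Sym2.eq_swap]
  refine ⟨M.vtx (M.φ d), M.vtx e, fun hab => ?_, ⟨d, hd, M.ends_eq d⟩, ⟨e, he, hende⟩⟩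
  have hde : d = e := hs.ends_injOn hdl g hd he (by rw [ends_eq, hende, hab])
  exact hs.φ_ne e ((M.φ.apply_symm_apply d).trans hde)

lemma exists_ncard_eq_three (hs : M.Simple) (hdl : M.DualLoopFree) {g : M.Face}
    {x : M.Vertex} (hx : x ∈ M.faceVertices g) :
    ∃ a b, s(x, a) ∈ M.faceEdges g ∧ s(x, b) ∈ M.faceEdges g ∧
      {x, a, b} ⊆ M.faceVertices g ∧ ({x, a, b} : Set M.Vertex).ncard = 3 := by
  obtain ⟨a, b, hab, ha, hb⟩ := hs.exists_ne_of_mem_faceVertices hdl hx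
  refine ⟨a, b, ha, hb, ?_, Set.ncard_eq_three.mpr
    ⟨_, _, _, hs.ne_of_mk_mem_faceEdges ha, hs.ne_of_mk_mem_faceEdges hb, hab, rfl⟩⟩
  simp only [Set.insert_subset_iff, Set.singleton_subset_iff]
  exact ⟨hx, mem_faceVertices_of_mk_mem_faceEdges ha, mem_faceVertices_of_mk_mem_faceEdges hb⟩

lemma three_le_ncard_faceVertices (hs : M.Simple) (hdl : M.DualLoopFree) (g : M.Face) :
    3 ≤ (M.faceVertices g).ncard := by
  obtain ⟨d, rfl⟩ := Quotient.exists_rep g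
  obtain ⟨_, _, -, -, hsub, h3⟩ := hs.exists_ncard_eq_three hdl ⟨d, rfl, rfl⟩
  exact h3 ▸ Set.ncard_le_ncard hsub

lemma three_le_faceSize (hs : M.Simple) (hdl : M.DualLoopFree) (g : M.Face) : 3 ≤ M.faceSize g :=
  (hs.three_le_ncard_faceVertices hdl g).trans (M.ncard_faceVertices_le g)

lemma mk_mem_faceEdges_of_faceSize_eq_three (hs : M.Simple) (hdl : M.DualLoopFree)
    {g : M.Face} (h3 : M.faceSize g = 3) {x y : M.Vertex} (hx : x ∈ M.faceVertices g)
    (hy : y ∈ M.faceVertices g) (hxy : x ≠ y) :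
    s(x, y) ∈ M.faceEdges g := by
  obtain ⟨a, b, ha, hb, hsub, hcard⟩ := hs.exists_ncard_eq_three hdl hx
  have hV : {x, a, b} = M.faceVertices g :=
    Set.eq_of_subset_of_ncard_le hsub (hcard ▸ h3 ▸ M.ncard_faceVertices_le g)
  rw [← hV] at hy
  rcases hy with rfl | rfl | rfl
  · exact absurd rfl hxy
  · exact ha
  · exact hb

lemma exists_ne_notMem_faceVertices (hs : M.Simple) (hdl : M.DualLoopFree) {g f : M.Face}
    (hf3 : M.faceSize f = 3) (hgf : Disjoint (M.faceEdges g) (M.faceEdges f)) {x : M.Vertex}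
    (hxf : x ∈ M.faceVertices f) (hxg : x ∈ M.faceVertices g) :
    ∃ a b, a ∉ M.faceVertices f ∧ b ∉ M.faceVertices f ∧ a ≠ b ∧
      s(x, a) ∈ M.faceEdges g ∧ s(x, b) ∈ M.faceEdges g := by
  have hout : ∀ a, s(x, a) ∈ M.faceEdges g → a ∉ M.faceVertices f := fun a ha hfa =>
    Set.disjoint_left.mp hgf ha <|
      hs.mk_mem_faceEdges_of_faceSize_eq_three hdl hf3 hxf hfa (hs.ne_of_mk_mem_faceEdges ha)
  obtain ⟨a, b, hab, ha, hb⟩ := hs.exists_ne_of_mem_faceVertices hdl hxg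
  exact ⟨a, b, hout a ha, hout b hb, hab, ha, hb⟩

end Simple

namespace IsEmptyCircuit

variable {k : ℕ} {fe f : M.Face}

-- Two edges of `f` into the same face would form a dual multi-edge avoiding `fe`.
lemma injOn_fce_σ (hc : M.IsEmptyCircuit k fe) (hne : f ≠ fe) (hna : ¬ M.FaceAdj fe f) :
    Set.InjOn (fun d => M.fce (M.σ d)) {d | M.fce d = f} := by
  obtain ⟨-, -, -, -, hdl, hmult⟩ := hc
  intro d hd d' hd' h
  by_cases he : M.edg d = M.edg d'
  · rcases M.edg_eq_edg_iff.mp he with rfl | rfl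
    · rfl
    · exact absurd (hd.trans hd'.symm) (hdl d)
  · rcases hmult d d' (hd.trans hd'.symm) h he with h1 | h1
    · exact absurd (hd.symm.trans h1) hne
    · exact absurd ⟨M.σ d, h1, by rwa [M.σ_invol]⟩ hna

lemma add_four_mul_faceSize_le (hc : M.IsEmptyCircuit k fe) (hne : f ≠ fe)
    (hna : ¬ M.FaceAdj fe f) : k + 4 * M.faceSize f ≤ Nat.card M.D := by
  classical
  have hinj := hc.injOn_fce_σ hne hna
  obtain ⟨-, hk, -, hs, hdl, -⟩ := hc
  have hfin : {d | M.fce d = f}.Finite := Set.toFinite _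
  set N : Finset M.Face := hfin.toFinset.image fun d => M.fce (M.σ d)
  have hN : #N = M.faceSize f := by
    rw [card_image_of_injOn (by simpa using hinj), faceSize_eq_ncard,
      Set.ncard_eq_toFinset_card _ hfin]
  have hNmem : ∀ g ∈ N, g ≠ fe ∧ g ≠ f := by
    simp only [N, mem_image, Set.Finite.mem_toFinset, Set.mem_ofPred_eq]
    rintro _ ⟨d, hd, rfl⟩
    exact ⟨fun h => hna ⟨M.σ d, h, by rwa [M.σ_invol]⟩, fun h => hdl d (hd.trans h.symm)⟩
  calc k + 4 * M.faceSize f = M.faceSize fe + M.faceSize f + #N • 3 := by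
        rw [hk, hN, smul_eq_mul]; ring
    _ ≤ M.faceSize fe + M.faceSize f + ∑ g ∈ N, M.faceSize g := by
        gcongr
        exact card_nsmul_le_sum _ _ _ fun g _ => hs.three_le_faceSize hdl g
    _ = ∑ g ∈ insert fe (insert f N), M.faceSize g := by
        rw [sum_insert, sum_insert, add_assoc]
        · exact fun h => (hNmem f h).2 rfl
        · simp only [mem_insert, not_or]
          exact ⟨hne.symm, fun h => (hNmem fe h).1 rfl⟩
    _ ≤ Nat.card M.D := sum_faceSize_le _

end IsEmptyCircuit

end CombMap

/-- For `k ∈ {3,4,5}`, there is no empty `k`-circuit containing a face `f` that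
shares no edge with the spanning face `f_e`. -/
theorem no_small_empty_circuit_with_nonneighbour_face
    (M : CombMap) (k : ℕ) (hk : k ∈ ({3, 4, 5} : Set ℕ)) (fe f : M.Face)
    (hcirc : M.IsEmptyCircuit k fe)
    (hne : f ≠ fe) (hnadj : ¬ M.FaceAdj fe f) :
    False := by
  have hdarts := hcirc.add_four_mul_faceSize_le hne hnadj
  obtain ⟨hnV, hsize, hspan, hs, hdl, -⟩ := hcirc
  have hD : Nat.card M.D ≤ k * (k - 1) :=
    hs.card_le_mul_pred.trans (Nat.mul_le_mul hnV (Nat.sub_le_sub_right hnV 1))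
  obtain ⟨rfl, hf3⟩ : k = 5 ∧ M.faceSize f = 3 := by
    have := hs.three_le_faceSize hdl f
    simp only [Set.mem_insert_iff, Set.mem_singleton_iff] at hk
    rcases hk with rfl | rfl | rfl <;> omega
  have hcross : 2 * (M.faceVertices f).ncard ≤ (M.faceEdges fe).ncard :=
    two_mul_ncard_le_ncard_of_forall_exists_ne (Set.toFinite _) fun x hx =>
      hs.exists_ne_notMem_faceVertices hdl hf3 (hs.disjoint_faceEdges hne.symm hnadj) hx (hspan x)
  have hfe := M.ncard_faceEdges_le fe
  have hf := hs.three_le_ncard_faceVertices hdl f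
  omega
end

section
/- Let G be a map with simple dual G*, K ⊆ E(G) a dual-separating edge set with K* induced by a face set X_f, and suppose vertices v, v' of G are not endpoints of any edge of K, v lies on a face of X_f and v' lies on a face of X_f^c. Then every path in G from v to v' contains a vertex incident with an edge of K; consequently the endpoints of K form a cut-set of G. -/
/-! Around a vertex not incident with `K`, consecutive faces in the rotation share an edge outside
`K`, so they lie on the same side of `X_f`; hence all faces at such a vertex lie on one side. An
edge outside `K` has both its faces on one side too, so along a walk avoiding `V(K)` the side
never changes, and no such walk leads from a vertex on `X_f` to one on `X_fᶜ`. -/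

theorem Equiv.Perm.SameCycle.iff_of_forall_iff_apply {α : Type*} [Finite α] {f : Equiv.Perm α}
    {p : α → Prop} {x y : α} (hxy : f.SameCycle x y)
    (hp : ∀ z, f.SameCycle x z → (p z ↔ p (f z))) : p x ↔ p y := by
  obtain ⟨n, rfl⟩ := hxy.exists_nat_pow_eq
  induction n with
  | zero => rfl
  | succ n ih =>
    rw [ih ⟨n, by simp⟩, hp _ ⟨n, by simp⟩, pow_succ', Equiv.Perm.mul_apply]

namespace CombMap

variable {M : CombMap}

theorem fce_σ (d : M.D) : M.fce (M.σ d) = M.fce (M.ρ d) :=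
  Quotient.sound (⟨1, by simp [φ, M.σ_invol]⟩ : M.φ.SameCycle (M.σ d) (M.ρ d))

def SidesAgreeAt (Xf : Set M.Face) (v : M.Vertex) : Prop :=
  ∀ d, M.vtx d = v → (M.fce d ∈ Xf ↔ M.fce (M.σ d) ∈ Xf)

def OnFaceIn (Xf : Set M.Face) (v : M.Vertex) : Prop :=
  ∃ d, M.vtx d = v ∧ M.fce d ∈ Xf

variable {Xf : Set M.Face} {v : M.Vertex}

theorem sidesAgreeAt_of_notMem {K : Set M.Edge}
    (hK : ∀ d, M.edg d ∈ K ↔ (M.fce d ∈ Xf ↔ M.fce (M.σ d) ∉ Xf))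
    (hv : v ∉ {w | ∃ d, M.edg d ∈ K ∧ M.vtx d = w}) : M.SidesAgreeAt Xf v := by
  rintro d rfl
  have := (hK d).not.mp fun hd => hv ⟨d, hd, rfl⟩
  tauto

theorem SidesAgreeAt.fce_mem_iff (hv : M.SidesAgreeAt Xf v) {d d' : M.D}
    (hd : M.vtx d = v) (hd' : M.vtx d' = v) : M.fce d ∈ Xf ↔ M.fce d' ∈ Xf := by
  refine (Quotient.exact (hd.trans hd'.symm) : M.ρ.SameCycle d d').iff_of_forall_iff_apply
    (p := fun x => M.fce x ∈ Xf) fun z hz => ?_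
  rw [← fce_σ]
  exact hv z ((Quotient.sound hz).symm.trans hd)

theorem SidesAgreeAt.onFaceIn_of_adj {w : M.Vertex} (hv : M.SidesAgreeAt Xf v)
    (hvw : M.graph.Adj v w) (hvX : M.OnFaceIn Xf v) : M.OnFaceIn Xf w := by
  obtain ⟨d, hd, hdX⟩ := hvX
  obtain ⟨-, ⟨e, he, he'⟩ | ⟨e, he', he⟩⟩ := hvw
  · exact ⟨M.σ e, he', (hv e he).mp ((hv.fce_mem_iff hd he).mp hdX)⟩
  · refine ⟨e, he', ?_⟩
    simpa only [M.σ_invol] using (hv (M.σ e) he).mp ((hv.fce_mem_iff hd he).mp hdX)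

theorem onFaceIn_of_walk {w : M.Vertex} (p : M.graph.Walk v w)
    (hp : ∀ u ∈ p.support, M.SidesAgreeAt Xf u) (hvX : M.OnFaceIn Xf v) : M.OnFaceIn Xf w := by
  induction p with
  | nil => exact hvX
  | cons hadj q ih =>
    rw [SimpleGraph.Walk.support_cons, List.forall_mem_cons] at hp
    exact ih hp.2 (hp.1.onFaceIn_of_adj hadj hvX)

end CombMap

open CombMap in
theorem dual_separating_cutset_general
    (M : CombMap)
    (Xf : Set M.Face) (K : Set M.Edge)
    (hK : ∀ d, M.edg d ∈ K ↔ (M.fce d ∈ Xf ↔ M.fce (M.σ d) ∉ Xf))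
    (VK : Set M.Vertex) (hVK : VK = {v | ∃ d, M.edg d ∈ K ∧ M.vtx d = v})
    (v v' : M.Vertex)
    (hv : v ∉ VK) (hv' : v' ∉ VK)
    (hvX : ∃ d, M.vtx d = v ∧ M.fce d ∈ Xf)
    (hv'X : ∃ d, M.vtx d = v' ∧ M.fce d ∉ Xf) :
    (∀ p : M.graph.Walk v v', ∃ w ∈ p.support, w ∈ VK) ∧
    ¬ (M.graph.induce VKᶜ).Reachable ⟨v, hv⟩ ⟨v', hv'⟩ := by
  have hwalk (p : M.graph.Walk v v') : ∃ w ∈ p.support, w ∈ VK := by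
    by_contra! hp
    obtain ⟨d, hd, hdX⟩ := onFaceIn_of_walk p
      (fun u hu => sidesAgreeAt_of_notMem hK (hVK ▸ hp u hu)) hvX
    obtain ⟨d', hd', hd'X⟩ := hv'X
    exact hd'X (((sidesAgreeAt_of_notMem hK (hVK ▸ hv')).fce_mem_iff hd hd').mp hdX)
  refine ⟨hwalk, fun ⟨q⟩ => ?_⟩
  obtain ⟨w, hw, hwK⟩ := hwalk (q.map (⟨Subtype.val, id⟩ : M.graph.induce VKᶜ →g M.graph))
  rw [SimpleGraph.Walk.support_map] at hw
  obtain ⟨u, -, rfl⟩ := List.mem_map.mp hw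
  exact u.2 hwK

/-- Let `K` be a dual-separating edge set of a map with simple dual, with `K*` the
edge cut of the dual induced by the face set `X_f`.  If `v` and `v'` are not
endpoints of edges of `K`, `v` lies on a face of `X_f` and `v'` on a face of the
complement, then every path from `v` to `v'` contains a vertex incident with an
edge of `K`; consequently the endpoints of the edges of `K` form a cut-set. -/
theorem dual_separating_cutset
    (M : CombMap) (hdual : M.DualSimple)
    (Xf : Set M.Face) (K : Set M.Edge)
    (hK : ∀ d, M.edg d ∈ K ↔ (M.fce d ∈ Xf ↔ M.fce (M.σ d) ∉ Xf))
    (VK : Set M.Vertex) (hVK : VK = {v | ∃ d, M.edg d ∈ K ∧ M.vtx d = v})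
    (v v' : M.Vertex)
    (hv : v ∉ VK) (hv' : v' ∉ VK)
    (hvX : ∃ d, M.vtx d = v ∧ M.fce d ∈ Xf)
    (hv'X : ∃ d, M.vtx d = v' ∧ M.fce d ∉ Xf) :
    (∀ p : M.graph.Walk v v', ∃ w ∈ p.support, w ∈ VK) ∧
    ¬ (M.graph.induce VKᶜ).Reachable ⟨v, hv⟩ ⟨v', hv'⟩ :=
  dual_separating_cutset_general M Xf K hK VK hVK v v' hv hv' hvX hv'X
end

section
/- Let G be a map with simple dual and K a dual-separating edge set. Then the number of vertices incident with edges of K is at most |K|, i.e. |V(K)| ≤ |K|. -/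
namespace CombMap

lemma vtx_rho_pow (M : CombMap) (d : M.D) (k : ℕ) : M.vtx ((M.ρ ^ k) d) = M.vtx d :=
  Quotient.sound (show M.ρ.SameCycle ((M.ρ ^ k) d) d from
    ⟨-(k : ℤ), by simp [← Equiv.Perm.mul_apply, ← zpow_natCast, ← zpow_add]⟩)

lemma fce_sigma_eq_fce_rho (M : CombMap) (d : M.D) : M.fce (M.σ d) = M.fce (M.ρ d) :=
  Quotient.sound (show M.φ.SameCycle (M.σ d) (M.ρ d) from
    ⟨1, by simp [φ, Equiv.Perm.mul_apply, M.σ_invol]⟩)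

lemma edg_eq_cases (M : CombMap) {e e' : M.D} (h : M.edg e = M.edg e') :
    e' = e ∨ e' = M.σ e := by
  obtain ⟨i, hi⟩ : M.σ.SameCycle e e' := Quotient.exact h
  have h2 : M.σ ^ (2 : ℤ) = 1 := by
    ext x
    have : M.σ ^ (2 : ℤ) = M.σ * M.σ := by
      rw [show (2 : ℤ) = 1 + 1 by norm_num, zpow_add, zpow_one]
    simp [this, Equiv.Perm.mul_apply, M.σ_invol]
  rcases Int.even_or_odd i with ⟨k, hk⟩ | ⟨k, hk⟩
  · left
    rw [hk, show k + k = 2 * k by ring, zpow_mul, h2, one_zpow] at hi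
    simp at hi
    exact hi.symm
  · right
    rw [hk, zpow_add, zpow_mul, h2, one_zpow, one_mul, zpow_one] at hi
    exact hi.symm

lemma exists_good_dart (M : CombMap) (Xf : Set M.Face) (K : Set M.Edge)
    (hK : ∀ d, M.edg d ∈ K ↔ (M.fce d ∈ Xf ↔ M.fce (M.σ d) ∉ Xf))
    (d : M.D) (hd : M.edg d ∈ K) :
    ∃ e, M.edg e ∈ K ∧ M.vtx e = M.vtx d ∧ M.fce e ∈ Xf := by
  classical
  by_cases h0 : M.fce d ∈ Xf
  · exact ⟨d, hd, rfl, h0⟩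
  · have hiff := (hK d).1 hd
    have hσ : M.fce (M.σ d) ∈ Xf := by tauto
    have hρ1 : M.fce ((M.ρ ^ 1) d) ∈ Xf := by
      rw [pow_one, ← M.fce_sigma_eq_fce_rho]; exact hσ
    have hn : ∃ m, 1 ≤ m ∧ M.fce ((M.ρ ^ m) d) ∉ Xf := by
      refine ⟨orderOf M.ρ, orderOf_pos M.ρ, ?_⟩
      rw [pow_orderOf_eq_one]
      simpa using h0
    obtain ⟨hm1, hmXf⟩ := Nat.find_spec hn
    set m := Nat.find hn with hmdef
    have hmne1 : m ≠ 1 := by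
      intro h
      rw [h] at hmXf
      exact hmXf hρ1
    have hm2 : 2 ≤ m := by omega
    refine ⟨(M.ρ ^ (m - 1)) d, ?_, M.vtx_rho_pow d (m - 1), ?_⟩
    · rw [hK]
      have hfk : M.fce ((M.ρ ^ (m - 1)) d) ∈ Xf := by
        by_contra h
        exact Nat.find_min hn (show m - 1 < m by omega) ⟨by omega, h⟩
      have hσk : M.fce (M.σ ((M.ρ ^ (m - 1)) d)) ∉ Xf := by
        rw [M.fce_sigma_eq_fce_rho]
        have : M.ρ ((M.ρ ^ (m - 1)) d) = (M.ρ ^ m) d := by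
          conv_rhs => rw [show m = (m - 1) + 1 by omega]
          rw [pow_succ', Equiv.Perm.mul_apply]
        rw [this]
        exact hmXf
      tauto
    · by_contra h
      exact Nat.find_min hn (show m - 1 < m by omega) ⟨by omega, h⟩

end CombMap

/-- For a dual-separating edge set `K` of a map with simple dual, the number of
vertices incident with edges of `K` is at most `|K|`. -/
theorem card_vertices_of_dual_separating_le
    (M : CombMap) (hdual : M.DualSimple)
    (Xf : Set M.Face) (K : Set M.Edge)
    (hK : ∀ d, M.edg d ∈ K ↔ (M.fce d ∈ Xf ↔ M.fce (M.σ d) ∉ Xf)) :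
    Nat.card {v : M.Vertex // ∃ d, M.edg d ∈ K ∧ M.vtx d = v} ≤ Nat.card K := by
  classical
  have key : ∀ v : {v : M.Vertex // ∃ d, M.edg d ∈ K ∧ M.vtx d = v},
      ∃ e, M.edg e ∈ K ∧ M.vtx e = v.1 ∧ M.fce e ∈ Xf := by
    rintro ⟨v, d, hd, rfl⟩
    exact M.exists_good_dart Xf K hK d hd
  choose e he hv hf using key
  have hinj : Function.Injective (fun v => (⟨M.edg (e v), he v⟩ : K)) := by
    intro v w h
    simp only [Subtype.mk.injEq] at h
    rcases M.edg_eq_cases h with h1 | h1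
    · ext
      rw [← hv v, ← hv w, h1]
    · exfalso
      have hge := (hK (e v)).1 (he v)
      have : M.fce (M.σ (e v)) ∉ Xf := hge.1 (hf v)
      rw [← h1] at this
      exact this (hf w)
  exact Nat.card_le_card_of_injective _ hinj
end
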